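/- If a rational matrix R over k(x) is the sum R1 + R2 of two rational matrices, then for every nonnegative integer ℓ, the ℓ-th determinantal denominator φ_ℓ(R) divides the product φ_ℓ(R1)·φ_ℓ(R2). -/

import Mathlib

open Polynomial

noncomputable section

/-- Normalization on a field: every nonzero element normalizes to `1`. -/
noncomputable def fieldNormalizationMonoid (K : Type*) [Field K] : NormalizationMonoid K := by
  classical
  exact
  { normUnit := fun a => if h : a = 0 then 1 else (Units.mk0 a h)⁻¹
    normUnit_zero := dif_pos rfl
    normUnit_one := by
      rw [dif_neg one_ne_zero]
      exact Units.ext (by simp)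
    normUnit_mul_units := fun {a} u ha => by
      rw [dif_neg (mul_ne_zero ha u.ne_zero), dif_neg ha]
      exact Units.ext (by simp [mul_comm]) }

attribute [local instance] fieldNormalizationMonoid

noncomputable local instance (K : Type*) [Field K] : NormalizedGCDMonoid (Polynomial K) :=
  UniqueFactorizationMonoid.toNormalizedGCDMonoid _

variable {k : Type*} [Field k] [CharZero k]

/-- The ℓ-th determinantal denominator of a rational matrix: the monic least common
denominator of all minors of size at most ℓ. -/
def detDen {n p : ℕ} (R : Matrix (Fin n) (Fin p) (RatFunc k)) (ℓ : ℕ) : Polynomial k :=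
  (Finset.range (ℓ + 1)).lcm fun i =>
    (Finset.univ : Finset ((Fin i ↪ Fin n) × (Fin i ↪ Fin p))).lcm fun fg =>
      (Matrix.det fun a b => R (fg.1 a) (fg.2 b)).denom

/-!
By multilinearity in the rows, `det (A + B)` is the sum, over the row sets `s`, of the determinants
of the matrices taking the rows in `s` from `A` and the other rows from `B`. The Laplace expansion
along the rows in `s` writes each of these as a signed sum of products of a minor of `A` and a minor
of `B`. So if `q₁ * μ ∈ S` for every minor `μ` of `A` and `q₂ * ν ∈ S` for every minor `ν` of `B`,
then `q₁ * q₂ * det (A + B) ∈ S`. Applied over `k[X] ⊆ k(X)` to a minor of `R1 + R2` of size at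
most `ℓ`, whose own minors are minors of `R1` and `R2` of size at most `ℓ`, this gives the claim.
-/

open Equiv Equiv.Perm

theorem QuotientGroup.sum_eq_sum_out_mul {G M : Type*} [Group G] [Fintype G] [AddCommMonoid M]
    (H : Subgroup G) [Fintype (G ⧸ H)] [Fintype H] (f : G → M) :
    ∑ g, f g = ∑ q : G ⧸ H, ∑ h : H, f (q.out * h) :=
  (Fintype.sum_equiv ((Equiv.Set.univ G).symm.trans
    ((preimageMkEquivSubgroupProdSet H Set.univ).trans
      ((Equiv.prodComm _ _).trans ((Equiv.Set.univ _).prodCongr (Equiv.refl H))))).symm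
    (fun x => f (x.1.out * x.2)) f fun _ => rfl).symm.trans (Fintype.sum_prod_type _)

namespace Matrix

variable {R : Type*} [CommRing R]

section Laplace

variable {α β : Type*} [Fintype α] [Fintype β] [DecidableEq α] [DecidableEq β]

/-- The Laplace expansion along the block of rows `α`. -/
theorem det_eq_sum_modSumCongr (M : Matrix (α ⊕ β) (α ⊕ β) R) :
    M.det = ∑ τ : ModSumCongr α β, sign τ.out •
      ((M.submatrix Sum.inl (τ.out ∘ Sum.inl)).det *
        (M.submatrix Sum.inr (τ.out ∘ Sum.inr)).det) := by
  rw [← det_transpose, det_apply, QuotientGroup.sum_eq_sum_out_mul (sumCongrHom α β).range]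
  refine Finset.sum_congr rfl fun τ _ => ?_
  rw [← (MonoidHom.ofInjective sumCongrHom_injective).toEquiv.sum_comp, ← det_transpose,
    ← det_transpose (submatrix _ _ _), det_apply, det_apply, Finset.sum_mul_sum,
    ← Finset.univ_product_univ, Finset.sum_product]
  simp only [Finset.smul_sum]
  refine Finset.sum_congr rfl fun π _ => Finset.sum_congr rfl fun ρ _ => ?_
  simp [MonoidHom.ofInjective_apply, Fintype.prod_sum_type, Perm.sign_mul, mul_smul,
    smul_mul_smul_comm]

end Laplace

variable {m n : Type*}

def IsMinorDenominator (S : Subring R) (q : R) (A : Matrix m n R) : Prop :=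
  ∀ (j : ℕ) (e : Fin j ↪ m) (f : Fin j ↪ n), q * (A.submatrix e f).det ∈ S

variable {S : Subring R}

theorem IsMinorDenominator.mul_det_submatrix_mem {q : R} {A : Matrix m n R}
    (hA : IsMinorDenominator S q A) {ι : Type*} [Fintype ι] [DecidableEq ι] (e : ι ↪ m)
    (f : ι ↪ n) : q * (A.submatrix e f).det ∈ S := by
  let σ := (Fintype.equivFin ι).symm
  rw [← det_submatrix_equiv_self σ]
  exact hA _ (σ.toEmbedding.trans e) (σ.toEmbedding.trans f)

variable [Fintype m] [DecidableEq m] {q₁ q₂ : R} {A B : Matrix m m R}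

theorem IsMinorDenominator.mul_mul_det_piecewise_mem (hA : IsMinorDenominator S q₁ A)
    (hB : IsMinorDenominator S q₂ B) (s : Finset m) :
    q₁ * q₂ * (of (s.piecewise A B)).det ∈ S := by
  let e := Equiv.sumCompl (· ∈ s)
  rw [← det_submatrix_equiv_self e, det_eq_sum_modSumCongr, Finset.mul_sum]
  refine S.sum_mem fun τ _ => ?_
  let cols := τ.out.toEmbedding.trans e.toEmbedding
  have hrowsA : ((of (s.piecewise A B)).submatrix e e).submatrix Sum.inl (τ.out ∘ Sum.inl) =
      A.submatrix (Function.Embedding.subtype _) (Function.Embedding.inl.trans cols) := by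
    ext a b
    exact congrFun (s.piecewise_eq_of_mem A B a.2) _
  have hrowsB : ((of (s.piecewise A B)).submatrix e e).submatrix Sum.inr (τ.out ∘ Sum.inr) =
      B.submatrix (Function.Embedding.subtype _) (Function.Embedding.inr.trans cols) := by
    ext a b
    exact congrFun (s.piecewise_eq_of_notMem A B a.2) _
  rw [hrowsA, hrowsB, mul_smul_comm, mul_mul_mul_comm]
  exact S.zsmul_mem (S.mul_mem (hA.mul_det_submatrix_mem _ _) (hB.mul_det_submatrix_mem _ _)) _

theorem IsMinorDenominator.mul_mul_det_add_mem (hA : IsMinorDenominator S q₁ A)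
    (hB : IsMinorDenominator S q₂ B) : q₁ * q₂ * (A + B).det ∈ S := by
  rw [show (A + B).det = ∑ s : Finset m, (of (s.piecewise A B)).det from
    detRowAlternating.map_add_univ A B, Finset.mul_sum]
  exact S.sum_mem fun s _ => hA.mul_mul_det_piecewise_mem hB s

end Matrix

theorem RatFunc.denom_dvd_iff_mul_mem_range {K : Type*} [Field K] {x : RatFunc K} {q : K[X]}
    (hq : q ≠ 0) :
    x.denom ∣ q ↔ algebraMap K[X] (RatFunc K) q * x ∈ (algebraMap K[X] (RatFunc K)).range := by
  have hq' := RatFunc.algebraMap_ne_zero hq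
  rw [RatFunc.denom_dvd hq]
  constructor
  · rintro ⟨p, rfl⟩
    exact ⟨p, (mul_div_cancel₀ _ hq').symm⟩
  · rintro ⟨p, hp⟩
    exact ⟨p, by rw [hp, mul_div_cancel_left₀ _ hq']⟩

open Matrix

section DetDen

variable {K : Type*} [Field K] {n p : ℕ} (R : Matrix (Fin n) (Fin p) (RatFunc K)) (ℓ : ℕ)

theorem detDen_dvd_iff {q : K[X]} :
    detDen R ℓ ∣ q ↔ ∀ i ≤ ℓ, ∀ (e : Fin i ↪ Fin n) (f : Fin i ↪ Fin p),
      (R.submatrix e f).det.denom ∣ q := by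
  simp only [detDen, Finset.lcm_dvd_iff, Finset.mem_range, Nat.lt_succ_iff, Finset.mem_univ,
    true_implies, Prod.forall]
  rfl

theorem detDen_ne_zero : detDen R ℓ ≠ 0 := by
  simp only [detDen, ne_eq, Finset.lcm_eq_zero_iff, not_exists, not_and]
  exact fun _ _ _ _ => RatFunc.denom_ne_zero _

variable {ℓ} in
theorem isMinorDenominator_detDen {i : ℕ} (hi : i ≤ ℓ) (e : Fin i ↪ Fin n) (f : Fin i ↪ Fin p) :
    IsMinorDenominator (algebraMap K[X] (RatFunc K)).range
      (algebraMap K[X] (RatFunc K) (detDen R ℓ)) (R.submatrix e f) := by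
  intro j e' f'
  rw [submatrix_submatrix, ← RatFunc.denom_dvd_iff_mul_mem_range (detDen_ne_zero R ℓ)]
  have hj : j ≤ i := by simpa using Fintype.card_le_of_embedding e'
  exact (detDen_dvd_iff R ℓ).1 dvd_rfl j (hj.trans hi) (e'.trans e) (f'.trans f)

end DetDen

/-- If `R = R1 + R2`, then for every `ℓ`, `φ_ℓ(R) ∣ φ_ℓ(R1) * φ_ℓ(R2)`. -/
theorem detDen_add_dvd {n p : ℕ} (R R1 R2 : Matrix (Fin n) (Fin p) (RatFunc k))
    (hR : R = R1 + R2) (ℓ : ℕ) :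
    detDen R ℓ ∣ detDen R1 ℓ * detDen R2 ℓ := by
  have hq := mul_ne_zero (detDen_ne_zero R1 ℓ) (detDen_ne_zero R2 ℓ)
  refine (detDen_dvd_iff R ℓ).2 fun i hi e f => ?_
  rw [RatFunc.denom_dvd_iff_mul_mem_range hq, hR, submatrix_add, map_mul]
  exact (isMinorDenominator_detDen R1 hi e f).mul_mul_det_add_mem
    (isMinorDenominator_detDen R2 hi e f)
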